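/- Let γ ≥ 1, let K be a compact subset of a real Banach space X, fix f₀ ∈ K and δ > 0, and set B_K := K ∩ B(f₀,δ), where B(f₀,δ) is the closed ball of radius δ centered at f₀. If m ≥ 1 is an integer such that δ*_{m,γ}(K)_X ≤ δ/8, then B_K can be covered by N balls of radius δ/2, where N ≤ (1 + 16γ²)^m. -/

import Mathlib

/-!
Take a stable pair `(a, M)` whose error on `K` is below `3δ/8`. Since `a` is `γ`-Lipschitz,
`a(K ∩ B(f₀, δ))` lies in the `‖·‖_Y`-ball of radius `γδ` about `a f₀`, and a volume comparison
covers that ball by `(1 + 2γδ / r)^m = (1 + 16γ²)^m` balls of radius `r = δ / (8γ)`. The decoder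
`M` maps these balls into balls of radius `δ/8`, so the decoded centres, enlarged to radius
`3δ/8 + δ/8 = δ/2`, cover `K ∩ B(f₀, δ)`.
-/

open Metric

def IsNorm {n : ℕ} (nrm : (Fin n → ℝ) → ℝ) : Prop :=
  (∀ x, 0 ≤ nrm x) ∧
  (∀ x, nrm x = 0 → x = 0) ∧
  (∀ (c : ℝ) (x), nrm (c • x) = |c| * nrm x) ∧
  (∀ x y, nrm (x + y) ≤ nrm x + nrm y)

noncomputable def stableWidth (X : Type*) [NormedAddCommGroup X]
    (K : Set X) (n : ℕ) (γ : ℝ) : ℝ :=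
  sInf { d | ∃ (nrm : (Fin n → ℝ) → ℝ) (a : X → Fin n → ℝ) (M : (Fin n → ℝ) → X),
    IsNorm nrm ∧
    (∀ f ∈ K, ∀ g ∈ K, nrm (a f - a g) ≤ γ * ‖f - g‖) ∧
    (∀ x y, ‖M x - M y‖ ≤ γ * nrm (x - y)) ∧
    d = ⨆ f : K, ‖(f : X) - M (a (f : X))‖ }

noncomputable def modStableWidth (X : Type*) [NormedAddCommGroup X]
    (K : Set X) (n : ℕ) (γ : ℝ) : ℝ :=
  sInf { d | ∃ (nrm : (Fin n → ℝ) → ℝ) (a : X → Fin n → ℝ) (M : (Fin n → ℝ) → X),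
    IsNorm nrm ∧
    (∀ f g : X, nrm (a f - a g) ≤ γ * ‖f - g‖) ∧
    (∀ x y, ‖M x - M y‖ ≤ γ * nrm (x - y)) ∧
    d = ⨆ f : K, ‖(f : X) - M (a (f : X))‖ }

noncomputable def entropyNumber (X : Type*) [NormedAddCommGroup X] (K : Set X) (n : ℕ) : ℝ :=
  sInf { ε : ℝ | 0 < ε ∧ ∃ T : Finset X, T.card ≤ 2 ^ n ∧ K ⊆ ⋃ c ∈ T, closedBall c ε }

open MeasureTheory Module

section Covering

theorem exists_finset_cover_of_card_le_of_pairwise_lt_dist {X : Type*} [PseudoMetricSpace X]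
    {A : Set X} {r : ℝ} (hr : 0 ≤ r) {N : ℕ}
    (hN : ∀ s : Finset X, ↑s ⊆ A → (s : Set X).Pairwise (r < dist · ·) → s.card ≤ N) :
    ∃ t : Finset X, t.card ≤ N ∧ A ⊆ ⋃ x ∈ t, closedBall x r := by
  classical
  let S : Set ℕ := {k | ∃ s : Finset X, ↑s ⊆ A ∧ (s : Set X).Pairwise (r < dist · ·) ∧ s.card = k}
  have hS : BddAbove S := by
    refine ⟨N, ?_⟩
    rintro _ ⟨s, hsA, hsep, rfl⟩
    exact hN s hsA hsep
  obtain ⟨t, htA, htsep, htmax⟩ := Nat.sSup_mem (s := S) ⟨0, ∅, by simp, by simp, rfl⟩ hS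
  refine ⟨t, hN t htA htsep, fun a ha => ?_⟩
  by_contra hcov
  have hfar : ∀ x ∈ t, r < dist a x := by
    simpa only [Set.mem_iUnion, mem_closedBall, exists_prop, not_exists, not_and, not_le]
      using hcov
  have hat : a ∉ t := fun h => (hfar a h).not_ge (by simpa using hr)
  -- a maximal separated family cannot be enlarged by a point at distance `> r` from it
  have hins : (insert a t).card ∈ S := by
    refine ⟨insert a t, ?_, ?_, rfl⟩
    · simpa [Set.insert_subset_iff] using ⟨ha, htA⟩
    · rw [Finset.coe_insert, Set.pairwise_insert]
      exact ⟨htsep, fun x hx _ => ⟨hfar x hx, dist_comm a x ▸ hfar x hx⟩⟩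
  have := le_csSup hS hins
  rw [Finset.card_insert_of_notMem hat, htmax] at this
  omega

variable {E : Type*} [NormedAddCommGroup E] [NormedSpace ℝ E] [FiniteDimensional ℝ E]

theorem Finset.card_le_of_subset_closedBall_of_pairwise_lt_dist {s : Finset E} {c : E} {R r : ℝ}
    (hR : 0 ≤ R) (hr : 0 < r) (hs : ↑s ⊆ closedBall c R)
    (hsep : (s : Set E).Pairwise (r < dist · ·)) :
    (s.card : ℝ) ≤ (1 + 2 * R / r) ^ finrank ℝ E := by
  borelize E
  let μ : Measure E := Measure.addHaar
  set n := finrank ℝ E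
  have hdisj : (s : Set E).PairwiseDisjoint fun x => closedBall x (r / 2) :=
    hsep.mono' fun x y h => closedBall_disjoint_closedBall (by linarith)
  have hsub : ⋃ x ∈ s, closedBall x (r / 2) ⊆ closedBall c (R + r / 2) :=
    Set.iUnion₂_subset fun x hx =>
      closedBall_subset_closedBall' (by linarith [mem_closedBall.1 (hs hx)])
  have hvol : s.card * (r / 2) ^ n * μ.real (closedBall 0 1) ≤
      (R + r / 2) ^ n * μ.real (closedBall 0 1) :=
    calc s.card * (r / 2) ^ n * μ.real (closedBall 0 1)
        = μ.real (⋃ x ∈ s, closedBall x (r / 2)) := by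
          rw [measureReal_biUnion_finset hdisj (fun _ _ => measurableSet_closedBall)
              fun _ _ => measure_closedBall_lt_top.ne,
            Finset.sum_congr rfl fun x _ => Measure.addHaar_real_closedBall' μ x (by linarith),
            Finset.sum_const, nsmul_eq_mul, mul_assoc]
      _ ≤ μ.real (closedBall c (R + r / 2)) := measureReal_mono hsub measure_closedBall_lt_top.ne
      _ = (R + r / 2) ^ n * μ.real (closedBall 0 1) :=
          Measure.addHaar_real_closedBall' μ c (by linarith)
  have hunit : 0 < μ.real (closedBall (0 : E) 1) :=
    ENNReal.toReal_pos (measure_closedBall_pos μ 0 one_pos).ne' measure_closedBall_lt_top.ne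
  calc (s.card : ℝ) ≤ (R + r / 2) ^ n / (r / 2) ^ n :=
        (le_div_iff₀ (by positivity)).2 (le_of_mul_le_mul_right hvol hunit)
    _ = (1 + 2 * R / r) ^ n := by
        rw [← div_pow]
        congr 1
        field_simp
        ring

theorem exists_finset_card_le_cover_of_subset_closedBall {A : Set E} {c : E} {R r : ℝ}
    (hR : 0 ≤ R) (hr : 0 < r) (hA : A ⊆ closedBall c R) :
    ∃ t : Finset E, (t.card : ℝ) ≤ (1 + 2 * R / r) ^ finrank ℝ E ∧
      A ⊆ ⋃ x ∈ t, closedBall x r := by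
  obtain ⟨t, ht, hcover⟩ := exists_finset_cover_of_card_le_of_pairwise_lt_dist hr.le
    (N := ⌊(1 + 2 * R / r) ^ finrank ℝ E⌋₊) fun s hsA hsep =>
      Nat.le_floor (s.card_le_of_subset_closedBall_of_pairwise_lt_dist hR hr (hsA.trans hA) hsep)
  exact ⟨t, (Nat.cast_le.2 ht).trans (Nat.floor_le (by positivity)), hcover⟩

end Covering

section CoordinateNorm

variable {n : ℕ} {nrm : (Fin n → ℝ) → ℝ}

theorem isNorm_norm : IsNorm fun x : Fin n → ℝ => ‖x‖ :=
  ⟨norm_nonneg, fun _ => norm_eq_zero.1, fun c x => by simp only [norm_smul, Real.norm_eq_abs],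
    norm_add_le⟩

/-- `ℝⁿ` as a type on which the norm `nrm` can be installed as an instance. -/
def WithNorm (_nrm : (Fin n → ℝ) → ℝ) : Type := Fin n → ℝ

instance : AddCommGroup (WithNorm nrm) := inferInstanceAs (AddCommGroup (Fin n → ℝ))

instance : Module ℝ (WithNorm nrm) := inferInstanceAs (Module ℝ (Fin n → ℝ))

instance : FiniteDimensional ℝ (WithNorm nrm) :=
  inferInstanceAs (FiniteDimensional ℝ (Fin n → ℝ))

instance [hN : Fact (IsNorm nrm)] : NormedAddCommGroup (WithNorm nrm) :=
  AddGroupNorm.toNormedAddCommGroup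
    { toFun := nrm
      map_zero' := by
        have h := hN.out.2.2.1 0 (0 : Fin n → ℝ)
        rwa [zero_smul, abs_zero, zero_mul] at h
      add_le' := hN.out.2.2.2
      neg' := fun x => by
        have h := hN.out.2.2.1 (-1) (show Fin n → ℝ from x)
        rwa [neg_one_smul, abs_neg, abs_one, one_mul] at h
      eq_zero_of_map_eq_zero' := hN.out.2.1 }

instance [hN : Fact (IsNorm nrm)] : NormedSpace ℝ (WithNorm nrm) where
  norm_smul_le c x := (hN.out.2.2.1 c x).le

theorem finrank_withNorm : finrank ℝ (WithNorm nrm) = n := finrank_fin_fun ℝ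

theorem IsNorm.exists_finset_card_le_cover (hN : IsNorm nrm) {A : Set (Fin n → ℝ)}
    {c : Fin n → ℝ} {R r : ℝ} (hR : 0 ≤ R) (hr : 0 < r) (hA : ∀ x ∈ A, nrm (x - c) ≤ R) :
    ∃ t : Finset (Fin n → ℝ), (t.card : ℝ) ≤ (1 + 2 * R / r) ^ n ∧
      ∀ x ∈ A, ∃ y ∈ t, nrm (x - y) ≤ r := by
  have : Fact (IsNorm nrm) := ⟨hN⟩
  obtain ⟨t, ht, hcover⟩ := exists_finset_card_le_cover_of_subset_closedBall (E := WithNorm nrm)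
    (A := A) (c := c) hR hr fun x hx => mem_closedBall_iff_norm.2 (hA x hx)
  rw [finrank_withNorm] at ht
  refine ⟨t, ht, fun x hx => ?_⟩
  obtain ⟨y, hy, hxy⟩ := Set.mem_iUnion₂.1 (hcover hx)
  exact ⟨y, hy, mem_closedBall_iff_norm.1 hxy⟩

end CoordinateNorm

section StableWidth

variable {X : Type*} [NormedAddCommGroup X] {K : Set X} {n : ℕ} {γ : ℝ}

theorem exists_lt_of_stableWidth_lt (hγ : 0 ≤ γ) {d : ℝ} (h : stableWidth X K n γ < d) :
    ∃ (nrm : (Fin n → ℝ) → ℝ) (a : X → Fin n → ℝ) (M : (Fin n → ℝ) → X),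
      IsNorm nrm ∧
      (∀ f ∈ K, ∀ g ∈ K, nrm (a f - a g) ≤ γ * ‖f - g‖) ∧
      (∀ x y, ‖M x - M y‖ ≤ γ * nrm (x - y)) ∧
      ⨆ f : K, ‖(f : X) - M (a (f : X))‖ < d := by
  -- the zero encoder and decoder witness that the infimum is over a nonempty set
  obtain ⟨_, ⟨nrm, a, M, hN, ha, hM, rfl⟩, hlt⟩ := exists_lt_of_csInf_lt (by
    exact ⟨_, fun x => ‖x‖, fun _ => 0, fun _ => 0, isNorm_norm,
      fun f _ g _ => by simpa using mul_nonneg hγ (norm_nonneg (f - g)),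
      fun x y => by simpa using mul_nonneg hγ (norm_nonneg (x - y)), rfl⟩) h
  exact ⟨nrm, a, M, hN, ha, hM, hlt⟩

theorem norm_sub_le_iSup_of_isCompact (hγ : 0 ≤ γ) (hK : IsCompact K)
    {nrm : (Fin n → ℝ) → ℝ} {a : X → Fin n → ℝ} {M : (Fin n → ℝ) → X}
    (ha : ∀ f ∈ K, ∀ g ∈ K, nrm (a f - a g) ≤ γ * ‖f - g‖)
    (hM : ∀ x y, ‖M x - M y‖ ≤ γ * nrm (x - y)) {f : X} (hf : f ∈ K) :
    ‖f - M (a f)‖ ≤ ⨆ g : K, ‖(g : X) - M (a (g : X))‖ := by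
  have hMa : LipschitzOnWith (γ ^ 2).toNNReal (M ∘ a) K :=
    LipschitzOnWith.of_dist_le_mul fun f hf g hg => by
      rw [dist_eq_norm, dist_eq_norm, Real.coe_toNNReal _ (sq_nonneg γ), sq, mul_assoc]
      exact (hM _ _).trans (mul_le_mul_of_nonneg_left (ha f hf g hg) hγ)
  have hcont : ContinuousOn (fun g => ‖g - M (a g)‖) K :=
    (continuousOn_id.sub hMa.continuousOn).norm
  exact le_ciSup_set (hK.bddAbove_image hcont) hf

end StableWidth

theorem stmt5_general {X : Type*} [NormedAddCommGroup X]
    (γ : ℝ) (hγ : 1 ≤ γ) (K : Set X) (hK : IsCompact K)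
    (f₀ : X) (hf₀ : f₀ ∈ K) (δ : ℝ) (hδ : 0 < δ)
    (m : ℕ) (hwidth : stableWidth X K m γ ≤ δ / 8) :
    ∃ T : Finset X, (T.card : ℝ) ≤ (1 + 16 * γ ^ 2) ^ m ∧
      K ∩ closedBall f₀ δ ⊆ ⋃ c ∈ T, closedBall c (δ / 2) := by
  classical
  have hγ0 : 0 < γ := by linarith
  obtain ⟨nrm, a, M, hN, ha, hM, hsup⟩ :=
    exists_lt_of_stableWidth_lt hγ0.le (hwidth.trans_lt (by linarith : δ / 8 < 3 * δ / 8))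
  have herr : ∀ f ∈ K, ‖f - M (a f)‖ < 3 * δ / 8 := fun f hf =>
    (norm_sub_le_iSup_of_isCompact hγ0.le hK ha hM hf).trans_lt hsup
  have hcode : ∀ x ∈ a '' (K ∩ closedBall f₀ δ), nrm (x - a f₀) ≤ γ * δ := by
    rintro _ ⟨f, ⟨hfK, hfB⟩, rfl⟩
    exact (ha f hfK f₀ hf₀).trans
      (mul_le_mul_of_nonneg_left (mem_closedBall_iff_norm.1 hfB) hγ0.le)
  obtain ⟨t, ht, hcover⟩ :=
    hN.exists_finset_card_le_cover (r := δ / (8 * γ)) (by positivity) (by positivity) hcode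
  refine ⟨t.image M, ?_, fun f hf => ?_⟩
  · calc ((t.image M).card : ℝ) ≤ t.card := Nat.cast_le.2 Finset.card_image_le
      _ ≤ (1 + 2 * (γ * δ) / (δ / (8 * γ))) ^ m := ht
      _ = (1 + 16 * γ ^ 2) ^ m := by field_simp; ring
  · obtain ⟨y, hy, hfy⟩ := hcover (a f) ⟨f, hf, rfl⟩
    refine Set.mem_biUnion (Finset.mem_image_of_mem M hy) (mem_closedBall_iff_norm.2 ?_)
    calc ‖f - M y‖ ≤ ‖f - M (a f)‖ + ‖M (a f) - M y‖ := norm_sub_le_norm_sub_add_norm_sub _ _ _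
      _ ≤ 3 * δ / 8 + γ * (δ / (8 * γ)) :=
          add_le_add (herr f hf.1).le ((hM _ _).trans (mul_le_mul_of_nonneg_left hfy hγ0.le))
      _ = δ / 2 := by field_simp; ring

/-- If δ*_{m,γ}(K)_X ≤ δ/8, then K ∩ B(f₀,δ) can be covered by at most
(1+16γ²)^m balls of radius δ/2. -/
theorem stmt5 {X : Type*} [NormedAddCommGroup X]
    (γ : ℝ) (hγ : 1 ≤ γ) (K : Set X) (hK : IsCompact K)
    (f₀ : X) (hf₀ : f₀ ∈ K) (δ : ℝ) (hδ : 0 < δ)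
    (m : ℕ) (hm : 1 ≤ m) (hwidth : stableWidth X K m γ ≤ δ / 8) :
    ∃ T : Finset X, (T.card : ℝ) ≤ (1 + 16 * γ ^ 2) ^ m ∧
      K ∩ closedBall f₀ δ ⊆ ⋃ c ∈ T, closedBall c (δ / 2) :=
  stmt5_general γ hγ K hK f₀ hf₀ δ hδ m hwidth
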